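/- Let 0 < q < p ≤ 1 and let n ≥ 1 be a natural number. Then the (p,q)-Bernstein operator reproduces the test functions e₀(t)=1, e₁(t)=t and satisfies: B_{n,p,q}(1;x) = 1, B_{n,p,q}(t;x) = x, and B_{n,p,q}(t²;x) = (p^{n-1}/[n]_{p,q}) x + (q [n-1]_{p,q}/[n]_{p,q}) x², for every x ∈ [0,1]. -/

import Mathlib

open Finset Set Filter Topology

/-- The (p,q)-integer `[n]_{p,q} = ∑_{i=0}^{n-1} p^(n-1-i) q^i`. -/
noncomputable def pqInt (p q : ℝ) (n : ℕ) : ℝ :=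
  ∑ i ∈ Finset.range n, p ^ (n - 1 - i) * q ^ i

/-- The (p,q)-factorial `[n]_{p,q}! = ∏_{j=1}^n [j]_{p,q}`. -/
noncomputable def pqFactorial (p q : ℝ) (n : ℕ) : ℝ :=
  ∏ j ∈ Finset.range n, pqInt p q (j + 1)

/-- The (p,q)-binomial coefficient. -/
noncomputable def pqChoose (p q : ℝ) (n k : ℕ) : ℝ :=
  pqFactorial p q n / (pqFactorial p q k * pqFactorial p q (n - k))

/-- The node `p^(n-k) [k]_{p,q} / [n]_{p,q}` of the (p,q)-Bernstein operator. -/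
noncomputable def pqNode (p q : ℝ) (n k : ℕ) : ℝ :=
  p ^ (n - k) * pqInt p q k / pqInt p q n

/-- The basis function
`p^((k(k-1)-n(n-1))/2) C(n,k)_{p,q} x^k ∏_{s=0}^{n-k-1} (p^s - q^s x)`,
where `p^((k(k-1)-n(n-1))/2)` is written as `p^(k(k-1)/2) / p^(n(n-1)/2)`. -/
noncomputable def pqBasis (p q : ℝ) (n k : ℕ) (x : ℝ) : ℝ :=
  (p ^ (k.choose 2) / p ^ (n.choose 2)) * pqChoose p q n k * x ^ k *
    ∏ s ∈ Finset.range (n - k), (p ^ s - q ^ s * x)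

/-- The (p,q)-Bernstein operator `B_{n,p,q}(f;x)`. -/
noncomputable def pqBernstein (p q : ℝ) (n : ℕ) (f : ℝ → ℝ) (x : ℝ) : ℝ :=
  ∑ k ∈ Finset.range (n + 1), pqBasis p q n k x * f (pqNode p q n k)

/-- The bivariate (p,q)-Bernstein operator
`B_{n,m}^{(p₁,q₁),(p₂,q₂)}(f;x,y)`. -/
noncomputable def pqBernstein2 (p₁ q₁ p₂ q₂ : ℝ) (n m : ℕ)
    (f : ℝ → ℝ → ℝ) (x y : ℝ) : ℝ :=
  ∑ k ∈ Finset.range (n + 1), ∑ j ∈ Finset.range (m + 1),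
    pqBasis p₁ q₁ n k x * pqBasis p₂ q₂ m j y *
      f (pqNode p₁ q₁ n k) (pqNode p₂ q₂ m j)

/-!
Write `b_{n,k}` for the basis functions and `t_{n,k}` for the nodes. Splitting
`[n+1] = p^(k+1) [n-k] + q^(n-k) [k+1]` gives a (p,q)-Pascal rule for the binomial coefficients,
hence a two-term recurrence expressing `b_{n+1,·}` through `b_{n,·}` whose coefficients add up to
one; so the `b_{n,k}` sum to `1`. The absorption identity `C(n+1,k+1) [k+1] = [n+1] C(n,k)` gives
`b_{n+1,k+1}(x) t_{n+1,k+1} = x b_{n,k}(x)`, and `[k+1] = p^k + q [k]` gives the affine relation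
`t_{n+1,k+1} = p^n/[n+1] + (q [n]/[n+1]) t_{n,k}`. Together,
`B_{n+1}(t g(t)) = x B_n(g(p^n/[n+1] + (q [n]/[n+1]) t))`, and `g = 1`, `g = id` give the first
and second moments.
-/

section PqCalculus

variable {p q : ℝ}

@[simp]
lemma pqInt_zero : pqInt p q 0 = 0 := by simp [pqInt]

lemma pqInt_succ (n : ℕ) : pqInt p q (n + 1) = p ^ n + q * pqInt p q n := by
  rw [pqInt, Finset.sum_range_succ', pqInt, Finset.mul_sum, add_comm]
  simp only [Nat.add_sub_cancel, pow_zero, mul_one]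
  congr 1
  refine Finset.sum_congr rfl fun i _ => ?_
  rw [show n - (i + 1) = n - 1 - i by omega]
  ring

lemma pqInt_add (a b : ℕ) :
    pqInt p q (a + b) = p ^ b * pqInt p q a + q ^ a * pqInt p q b := by
  induction a with
  | zero => simp
  | succ a ih =>
    rw [Nat.add_right_comm, pqInt_succ, ih, pqInt_succ]
    ring

lemma pqInt_succ_pos (hp : 0 < p) (hq : 0 ≤ q) (n : ℕ) : 0 < pqInt p q (n + 1) := by
  rw [pqInt_succ]
  have : 0 ≤ pqInt p q n := Finset.sum_nonneg fun i _ => by positivity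
  positivity

@[simp]
lemma pqFactorial_zero : pqFactorial p q 0 = 1 := by simp [pqFactorial]

lemma pqFactorial_succ (n : ℕ) :
    pqFactorial p q (n + 1) = pqFactorial p q n * pqInt p q (n + 1) :=
  Finset.prod_range_succ _ _

lemma pqFactorial_pos (hp : 0 < p) (hq : 0 ≤ q) (n : ℕ) : 0 < pqFactorial p q n :=
  Finset.prod_pos fun j _ => pqInt_succ_pos hp hq j

lemma pqChoose_zero_right (hp : 0 < p) (hq : 0 ≤ q) (n : ℕ) : pqChoose p q n 0 = 1 := by
  simp [pqChoose, (pqFactorial_pos hp hq n).ne']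

lemma pqChoose_self (hp : 0 < p) (hq : 0 ≤ q) (n : ℕ) : pqChoose p q n n = 1 := by
  simp [pqChoose, (pqFactorial_pos hp hq n).ne']

lemma pqChoose_succ_succ (hp : 0 < p) (hq : 0 ≤ q) {n k : ℕ} (hk : k < n) :
    pqChoose p q (n + 1) (k + 1) =
      p ^ (k + 1) * pqChoose p q n (k + 1) + q ^ (n - k) * pqChoose p q n k := by
  obtain ⟨m, rfl⟩ : ∃ m, n = k + m + 1 := ⟨n - k - 1, by omega⟩
  have hsplit : pqInt p q (k + m + 1 + 1) =
      p ^ (k + 1) * pqInt p q (m + 1) + q ^ (m + 1) * pqInt p q (k + 1) := by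
    rw [show k + m + 1 + 1 = (m + 1) + (k + 1) by omega, pqInt_add]
  simp only [pqChoose, show k + m + 1 + 1 - (k + 1) = m + 1 by omega,
    show k + m + 1 - (k + 1) = m by omega, show k + m + 1 - k = m + 1 by omega]
  rw [pqFactorial_succ (k + m + 1), hsplit, pqFactorial_succ k, pqFactorial_succ m]
  have := (pqFactorial_pos hp hq k).ne'
  have := (pqFactorial_pos hp hq m).ne'
  have := (pqInt_succ_pos hp hq k).ne'
  have := (pqInt_succ_pos hp hq m).ne'
  field_simp

lemma pqChoose_succ_succ_mul_pqInt (hp : 0 < p) (hq : 0 ≤ q) {n k : ℕ} (hk : k ≤ n) :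
    pqChoose p q (n + 1) (k + 1) * pqInt p q (k + 1) =
      pqInt p q (n + 1) * pqChoose p q n k := by
  obtain ⟨m, rfl⟩ : ∃ m, n = k + m := ⟨n - k, by omega⟩
  simp only [pqChoose, show k + m + 1 - (k + 1) = m by omega, Nat.add_sub_cancel_left]
  rw [pqFactorial_succ (k + m), pqFactorial_succ k]
  have := (pqFactorial_pos hp hq k).ne'
  have := (pqFactorial_pos hp hq m).ne'
  have := (pqInt_succ_pos hp hq k).ne'
  field_simp

end PqCalculus

lemma Finset.sum_range_add_two_of_pascal {M : Type*} [AddCommMonoid M] {f c d : ℕ → M} {n : ℕ}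
    (hzero : f 0 = c 0) (hsucc : ∀ k < n, f (k + 1) = c (k + 1) + d k) (hlast : f (n + 1) = d n) :
    ∑ k ∈ Finset.range (n + 2), f k = ∑ k ∈ Finset.range (n + 1), (c k + d k) := by
  have hmid : ∑ k ∈ Finset.range n, f (k + 1) = ∑ k ∈ Finset.range n, (c (k + 1) + d k) :=
    Finset.sum_congr rfl fun k hk => hsucc k (Finset.mem_range.1 hk)
  rw [Finset.sum_range_succ', Finset.sum_range_succ, hmid, hlast, hzero, Finset.sum_add_distrib,
    Finset.sum_add_distrib, Finset.sum_range_succ' c, Finset.sum_range_succ d]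
  abel

section PqBernstein

variable {p q : ℝ}

lemma pqBasis_self (hp : 0 < p) (hq : 0 ≤ q) (n : ℕ) (x : ℝ) : pqBasis p q n n x = x ^ n := by
  simp [pqBasis, pqChoose_self hp hq, hp.ne']

lemma pqBasis_succ_zero (hp : 0 < p) (hq : 0 ≤ q) (n : ℕ) (x : ℝ) :
    pqBasis p q (n + 1) 0 x = pqBasis p q n 0 x * (1 - (q / p) ^ n * x) := by
  simp only [pqBasis, pqChoose_zero_right hp hq, Nat.sub_zero, Finset.prod_range_succ,
    Nat.choose_succ_succ' n 1, Nat.choose_one_right, pow_add, div_pow]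
  generalize ∏ s ∈ Finset.range n, (p ^ s - q ^ s * x) = P
  have := hp.ne'
  field_simp

lemma pqBasis_succ_succ (hp : 0 < p) (hq : 0 ≤ q) {n k : ℕ} (hk : k < n) (x : ℝ) :
    pqBasis p q (n + 1) (k + 1) x =
      pqBasis p q n (k + 1) x * (1 - (q / p) ^ (n - (k + 1)) * x) +
        (q / p) ^ (n - k) * x * pqBasis p q n k x := by
  rw [pqBasis, pqBasis, pqBasis, pqChoose_succ_succ hp hq hk]
  obtain ⟨m, rfl⟩ : ∃ m, n = k + m + 1 := ⟨n - k - 1, by omega⟩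
  simp only [show k + m + 1 + 1 - (k + 1) = m + 1 by omega,
    show k + m + 1 - (k + 1) = m by omega, show k + m + 1 - k = m + 1 by omega,
    Finset.prod_range_succ, Nat.choose_succ_succ' _ 1, Nat.choose_one_right, pow_add, div_pow]
  have := hp.ne'
  field_simp

lemma sum_pqBasis (hp : 0 < p) (hq : 0 ≤ q) (n : ℕ) (x : ℝ) :
    ∑ k ∈ Finset.range (n + 1), pqBasis p q n k x = 1 := by
  induction n with
  | zero => simp [pqBasis, pqChoose]
  | succ n ih =>
    rw [Finset.sum_range_add_two_of_pascal
      (c := fun k => pqBasis p q n k x * (1 - (q / p) ^ (n - k) * x))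
      (d := fun k => (q / p) ^ (n - k) * x * pqBasis p q n k x)]
    · exact (Finset.sum_congr rfl fun k _ => by ring).trans ih
    · simpa using pqBasis_succ_zero hp hq n x
    · exact fun k hk => pqBasis_succ_succ hp hq hk x
    · simp [pqBasis_self hp hq, pow_succ, mul_comm]

@[simp]
lemma pqNode_zero_right (n : ℕ) : pqNode p q n 0 = 0 := by simp [pqNode]

lemma pqNode_succ_succ (hp : 0 < p) (hq : 0 ≤ q) {n k : ℕ} (hk : k ≤ n) :
    pqNode p q (n + 1) (k + 1) =
      p ^ n / pqInt p q (n + 1) + q * pqInt p q n / pqInt p q (n + 1) * pqNode p q n k := by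
  have := (pqInt_succ_pos hp hq n).ne'
  rcases k with _ | k
  · simp [pqNode, pqInt_succ]
  obtain ⟨m, rfl⟩ : ∃ m, n = k + m + 1 := ⟨n - k - 1, by omega⟩
  have := (pqInt_succ_pos hp hq (k + m)).ne'
  simp only [pqNode, show k + m + 1 + 1 - (k + 1 + 1) = m by omega,
    show k + m + 1 - (k + 1) = m by omega, pqInt_succ (k + 1)]
  field_simp
  ring

lemma pqBasis_succ_succ_mul_pqNode (hp : 0 < p) (hq : 0 ≤ q) {n k : ℕ} (hk : k ≤ n)
    (x : ℝ) :
    pqBasis p q (n + 1) (k + 1) x * pqNode p q (n + 1) (k + 1) = x * pqBasis p q n k x := by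
  have habsorb := pqChoose_succ_succ_mul_pqInt hp hq hk
  have := (pqInt_succ_pos hp hq n).ne'
  obtain ⟨m, rfl⟩ : ∃ m, n = k + m := ⟨n - k, by omega⟩
  simp only [pqBasis, pqNode, show k + m + 1 - (k + 1) = m by omega, Nat.add_sub_cancel_left,
    Nat.choose_succ_succ' _ 1, Nat.choose_one_right, pow_add]
  generalize ∏ s ∈ Finset.range m, (p ^ s - q ^ s * x) = P
  have := hp.ne'
  field_simp
  linear_combination x ^ k * x * P * habsorb

lemma pqBernstein_const (hp : 0 < p) (hq : 0 ≤ q) (n : ℕ) (c x : ℝ) :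
    pqBernstein p q n (fun _ => c) x = c := by
  rw [pqBernstein, ← Finset.sum_mul, sum_pqBasis hp hq, one_mul]

lemma pqBernstein_const_add_mul (hp : 0 < p) (hq : 0 ≤ q) (n : ℕ) (a b : ℝ) (f : ℝ → ℝ)
    (x : ℝ) :
    pqBernstein p q n (fun t => a + b * f t) x = a + b * pqBernstein p q n f x := by
  simp only [pqBernstein, mul_add, Finset.sum_add_distrib, Finset.mul_sum]
  congr 1
  · exact pqBernstein_const hp hq n a x
  · exact Finset.sum_congr rfl fun k _ => by ring

lemma pqBernstein_succ_id_mul (hp : 0 < p) (hq : 0 ≤ q) (n : ℕ) (g : ℝ → ℝ) (x : ℝ) :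
    pqBernstein p q (n + 1) (fun t => t * g t) x =
      x * pqBernstein p q n
        (fun t => g (p ^ n / pqInt p q (n + 1) + q * pqInt p q n / pqInt p q (n + 1) * t)) x := by
  rw [pqBernstein, Finset.sum_range_succ', pqNode_zero_right, zero_mul, mul_zero, add_zero,
    pqBernstein, Finset.mul_sum]
  refine Finset.sum_congr rfl fun k hk => ?_
  have hk : k ≤ n := Nat.lt_succ_iff.1 (Finset.mem_range.1 hk)
  rw [← mul_assoc, pqBasis_succ_succ_mul_pqNode hp hq hk, pqNode_succ_succ hp hq hk, mul_assoc]

lemma pqBernstein_id (hp : 0 < p) (hq : 0 ≤ q) {n : ℕ} (hn : 1 ≤ n) (x : ℝ) :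
    pqBernstein p q n (fun t => t) x = x := by
  obtain ⟨n, rfl⟩ := Nat.exists_eq_add_of_le' hn
  simpa [pqBernstein_const hp hq] using pqBernstein_succ_id_mul hp hq n (fun _ => 1) x

lemma pqBernstein_sq (hp : 0 < p) (hq : 0 ≤ q) {n : ℕ} (hn : 1 ≤ n) (x : ℝ) :
    pqBernstein p q n (fun t => t ^ 2) x =
      p ^ (n - 1) / pqInt p q n * x + q * pqInt p q (n - 1) / pqInt p q n * x ^ 2 := by
  obtain ⟨n, rfl⟩ := Nat.exists_eq_add_of_le' hn
  have hfirst : q * pqInt p q n * pqBernstein p q n (fun t => t) x = q * pqInt p q n * x := by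
    rcases n with _ | n
    · simp
    · rw [pqBernstein_id hp hq (Nat.le_add_left 1 n)]
  simp only [sq, pqBernstein_succ_id_mul hp hq n (fun t => t), pqBernstein_const_add_mul hp hq,
    Nat.add_sub_cancel]
  linear_combination x / pqInt p q (n + 1) * hfirst

end PqBernstein

theorem pqBernstein_moments_e0_e1_e2_general (p q : ℝ) (n : ℕ)
    (hq : 0 < q) (hqp : q < p) (hn : 1 ≤ n)
    (x : ℝ) :
    pqBernstein p q n (fun _ => 1) x = 1 ∧
    pqBernstein p q n (fun t => t) x = x ∧
    pqBernstein p q n (fun t => t ^ 2) x =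
      (p ^ (n - 1) / pqInt p q n) * x +
      (q * pqInt p q (n - 1) / pqInt p q n) * x ^ 2 := by
  have hp : 0 < p := hq.trans hqp
  exact ⟨pqBernstein_const hp hq.le n 1 x, pqBernstein_id hp hq.le hn x,
    pqBernstein_sq hp hq.le hn x⟩

theorem pqBernstein_moments_e0_e1_e2 (p q : ℝ) (n : ℕ)
    (hq : 0 < q) (hqp : q < p) (hp : p ≤ 1) (hn : 1 ≤ n)
    (x : ℝ) (hx : x ∈ Set.Icc (0 : ℝ) 1) :
    pqBernstein p q n (fun _ => 1) x = 1 ∧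
    pqBernstein p q n (fun t => t) x = x ∧
    pqBernstein p q n (fun t => t ^ 2) x =
      (p ^ (n - 1) / pqInt p q n) * x +
      (q * pqInt p q (n - 1) / pqInt p q n) * x ^ 2 :=
  pqBernstein_moments_e0_e1_e2_general p q n hq hqp hn x
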